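/- Let Y = G + iB be an n×n complex matrix, where G and B are real n×n matrices, G is symmetric positive definite, and B is symmetric. Then the imaginary part of Y⁻¹ satisfies Im[Y⁻¹] = −(G + B·G⁻¹·B)⁻¹ · B · G⁻¹. -/

import Mathlib

/-!
Over `ℂ`, `(G - iB) G⁻¹ (G + iB) = G + B G⁻¹ B =: M`, so `Y⁻¹ = M⁻¹ (G - iB) G⁻¹`, whose imaginary
part is `-M⁻¹ B G⁻¹`. Taking determinants in the factorization, `det M = |det Y|² / det G`, so `M`
is singular exactly when `Y` is, and the identity also holds for the junk inverses `0`.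
-/

open Matrix ComplexConjugate

namespace Matrix

variable {l m n : Type*}

theorem isUnit_det_of_dotProduct_mulVec_pos [Fintype n] [DecidableEq n] {R : Type*} [Field R]
    [Preorder R] {G : Matrix n n R} (hG : ∀ x : n → R, x ≠ 0 → 0 < x ⬝ᵥ (G *ᵥ x)) :
    IsUnit G.det := by
  refine isUnit_iff_ne_zero.mpr fun hdet => ?_
  obtain ⟨v, hv, hGv⟩ := exists_mulVec_eq_zero_iff.mpr hdet
  simpa [hGv] using hG v hv

theorem inv_eq_map_inv_mul_of_mul_eq_map [Fintype n] [DecidableEq n] {R S : Type*} [Field R]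
    [CommRing S] [Nontrivial S] (f : R →+* S) {Y C : Matrix n n S} {M : Matrix n n R}
    (hCY : C * Y = M.map f) (hC : IsUnit Y.det → IsUnit C.det) : Y⁻¹ = M⁻¹.map f * C := by
  have hdet : f M.det = C.det * Y.det := by
    rw [RingHom.map_det, RingHom.mapMatrix_apply, ← hCY, det_mul]
  by_cases hY : IsUnit Y.det
  · have hM : IsUnit M.det := isUnit_iff_ne_zero.mpr fun h0 => by
      simpa [← hdet, h0] using (hC hY).mul hY
    refine inv_eq_left_inv ?_
    rw [mul_assoc, hCY, ← Matrix.map_mul, nonsing_inv_mul M hM,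
      Matrix.map_one _ f.map_zero f.map_one]
  · have hM : ¬IsUnit M.det := fun hM => hY (isUnit_of_mul_isUnit_right (hdet ▸ hM.map f))
    simp [nonsing_inv_apply_not_isUnit _ hY, nonsing_inv_apply_not_isUnit _ hM]

def ofReIm (A B : Matrix m n ℝ) : Matrix m n ℂ := of fun i j => ⟨A i j, B i j⟩

@[simp]
theorem re_ofReIm_apply (A B : Matrix m n ℝ) (i : m) (j : n) : (ofReIm A B i j).re = A i j := rfl

@[simp]
theorem im_ofReIm_apply (A B : Matrix m n ℝ) (i : m) (j : n) : (ofReIm A B i j).im = B i j := rfl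

@[simp]
theorem map_im_ofReIm (A B : Matrix m n ℝ) : (ofReIm A B).map Complex.im = B := rfl

theorem ofReIm_zero (A : Matrix m n ℝ) : ofReIm A 0 = A.map Complex.ofRealHom := by
  ext i j : 2
  apply Complex.ext <;> simp

theorem map_conj_ofReIm (A B : Matrix m n ℝ) : (ofReIm A B).map conj = ofReIm A (-B) := by
  ext i j : 2
  apply Complex.ext <;> simp

theorem det_ofReIm_neg [Fintype n] [DecidableEq n] (A B : Matrix n n ℝ) :
    (ofReIm A (-B)).det = conj (ofReIm A B).det := by
  rw [RingHom.map_det, RingHom.mapMatrix_apply, map_conj_ofReIm]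

theorem ofReIm_mul_ofReIm [Fintype m] (A B : Matrix l m ℝ) (C D : Matrix m n ℝ) :
    ofReIm A B * ofReIm C D = ofReIm (A * C - B * D) (A * D + B * C) := by
  ext i j : 2
  apply Complex.ext <;> simp [mul_apply, Complex.re_sum, Complex.im_sum, Finset.sum_sub_distrib,
    Finset.sum_add_distrib]

theorem ofReIm_neg_mul_ofReIm_mul_ofReIm [Fintype n] [DecidableEq n] {G H : Matrix n n ℝ}
    (B : Matrix n n ℝ) (hGH : G * H = 1) (hHG : H * G = 1) :
    ofReIm G (-B) * ofReIm H 0 * ofReIm G B = ofReIm (G + B * H * B) 0 := by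
  simp [ofReIm_mul_ofReIm, hGH, mul_assoc, hHG]

end Matrix

theorem complex_matrix_inv_im_formula_general {n : ℕ}
    (G B : Matrix (Fin n) (Fin n) ℝ) (Y : Matrix (Fin n) (Fin n) ℂ)
    (hRe : ∀ i j, (Y i j).re = G i j) (hIm : ∀ i j, (Y i j).im = B i j)
    (hGpd : ∀ x : Fin n → ℝ, x ≠ 0 → 0 < x ⬝ᵥ (G *ᵥ x)) :
    Y⁻¹.map Complex.im = -((G + B * G⁻¹ * B)⁻¹ * B * G⁻¹) := by
  have hG := isUnit_det_of_dotProduct_mulVec_pos hGpd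
  obtain rfl : Y = ofReIm G B := by ext i j : 2; apply Complex.ext <;> simp [hRe, hIm]
  have hCY := ofReIm_neg_mul_ofReIm_mul_ofReIm B (mul_nonsing_inv G hG) (nonsing_inv_mul G hG)
  simp only [ofReIm_zero] at hCY
  have hY := inv_eq_map_inv_mul_of_mul_eq_map Complex.ofRealHom hCY fun hY => by
    rw [det_mul, det_ofReIm_neg, ← RingHom.mapMatrix_apply, ← RingHom.map_det]
    exact (hY.map conj).mul ((isUnit_nonsing_inv_det G hG).map _)
  rw [hY, ← ofReIm_zero, ← ofReIm_zero, ofReIm_mul_ofReIm, ofReIm_mul_ofReIm, map_im_ofReIm]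
  noncomm_ring

/-- Formula `X = −R·B·G⁻¹` from the proof of Lemma 1:
`Im[Y⁻¹] = −(G + B G⁻¹ B)⁻¹ B G⁻¹`. -/
theorem complex_matrix_inv_im_formula {n : ℕ}
    (G B : Matrix (Fin n) (Fin n) ℝ) (Y : Matrix (Fin n) (Fin n) ℂ)
    (hRe : ∀ i j, (Y i j).re = G i j) (hIm : ∀ i j, (Y i j).im = B i j)
    (hGsym : G = Gᵀ)
    (hGpd : ∀ x : Fin n → ℝ, x ≠ 0 → 0 < x ⬝ᵥ (G *ᵥ x))
    (hBsym : B = Bᵀ) :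
    Y⁻¹.map Complex.im = -((G + B * G⁻¹ * B)⁻¹ * B * G⁻¹) :=
  complex_matrix_inv_im_formula_general G B Y hRe hIm hGpd
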